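/- arXiv:2601.08353 — 5 statements merged into one kernel-verified Lean document; each statement's English description precedes it below -/
import Mathlib

section
/- For all real numbers x, y with 0 < y < x, one has Γ(x) / (Γ(y)·Γ(x−y)) ≤ (x/4)·2^x, where Γ denotes Euler's Gamma function. -/
open MeasureTheory intervalIntegral Real

private lemma beta_integrable {a b : ℝ} (ha : 0 < a) (hb : 0 < b) :
    IntervalIntegrable (fun t : ℝ => t ^ (a - 1) * (1 - t) ^ (b - 1)) volume 0 1 := by
  have hc := Complex.betaIntegral_convergent (u := (a : ℂ)) (v := (b : ℂ)) (by simpa) (by simpa)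
  rw [intervalIntegrable_iff] at hc ⊢
  have := hc.re
  refine IntegrableOn.congr_fun this (fun t ht => ?_) measurableSet_uIoc
  rw [Set.uIoc_of_le (by norm_num : (0:ℝ) ≤ 1)] at ht
  have ht0 : (0:ℝ) ≤ t := le_of_lt ht.1
  have ht1 : (0:ℝ) ≤ 1 - t := by linarith [ht.2]
  have e1 : ((t : ℂ)) ^ ((a : ℂ) - 1) = ((t ^ (a - 1) : ℝ) : ℂ) := by
    rw [Complex.ofReal_cpow ht0]; push_cast; ring_nf
  have e2 : (1 - (t : ℂ)) ^ ((b : ℂ) - 1) = (((1 - t) ^ (b - 1) : ℝ) : ℂ) := by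
    rw [show (1 - (t:ℂ)) = (((1 - t : ℝ)) : ℂ) by push_cast; ring, Complex.ofReal_cpow ht1]
    push_cast; ring_nf
  simp [e1, e2, ← Complex.ofReal_mul]

private lemma gamma_beta {a b : ℝ} (ha : 0 < a) (hb : 0 < b) :
    Real.Gamma a * Real.Gamma b =
      Real.Gamma (a + b) * ∫ t in (0:ℝ)..1, t ^ (a - 1) * (1 - t) ^ (b - 1) := by
  have hc := Complex.Gamma_mul_Gamma_eq_betaIntegral (s := (a : ℂ)) (t := (b : ℂ))
    (by simpa) (by simpa)
  have hbeta : Complex.betaIntegral (a : ℂ) (b : ℂ) =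
      ((∫ t in (0:ℝ)..1, t ^ (a - 1) * (1 - t) ^ (b - 1) : ℝ) : ℂ) := by
    rw [Complex.betaIntegral, ← intervalIntegral.integral_ofReal]
    refine intervalIntegral.integral_congr (fun t ht => ?_)
    rw [Set.uIcc_of_le (by norm_num : (0:ℝ) ≤ 1)] at ht
    have ht0 : (0:ℝ) ≤ t := ht.1
    have ht1 : (0:ℝ) ≤ 1 - t := by linarith [ht.2]
    have e1 : ((t : ℂ)) ^ ((a : ℂ) - 1) = ((t ^ (a - 1) : ℝ) : ℂ) := by
      rw [Complex.ofReal_cpow ht0]; push_cast; ring_nf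
    have e2 : (1 - (t : ℂ)) ^ ((b : ℂ) - 1) = (((1 - t) ^ (b - 1) : ℝ) : ℂ) := by
      rw [show (1 - (t:ℂ)) = (((1 - t : ℝ)) : ℂ) by push_cast; ring, Complex.ofReal_cpow ht1]
      push_cast; ring_nf
    simp [e1, e2, ← Complex.ofReal_mul]
  rw [hbeta, ← Complex.ofReal_add, Complex.Gamma_ofReal, Complex.Gamma_ofReal,
    Complex.Gamma_ofReal, ← Complex.ofReal_mul, ← Complex.ofReal_mul] at hc
  exact_mod_cast hc

private lemma beta_symm (a b : ℝ) :
    (∫ t in (0:ℝ)..1, t ^ (a - 1) * (1 - t) ^ (b - 1)) =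
      ∫ t in (0:ℝ)..1, t ^ (b - 1) * (1 - t) ^ (a - 1) := by
  have h := intervalIntegral.integral_comp_sub_left
    (a := (0:ℝ)) (b := 1) (fun t : ℝ => t ^ (b - 1) * (1 - t) ^ (a - 1)) 1
  norm_num at h
  rw [← h]
  refine intervalIntegral.integral_congr (fun t ht => ?_)
  ring

private lemma key {a b : ℝ} (ha : 0 < a) (hb : 0 < b) (hab : a ≤ b) :
    4 / ((a + b) * 2 ^ (a + b)) ≤ ∫ t in (0:ℝ)..1, t ^ (a - 1) * (1 - t) ^ (b - 1) := by
  set x := a + b with hxdef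
  have hx : 0 < x := by positivity
  have h2x : (0:ℝ) < 2 ^ x := rpow_pos_of_pos two_pos x
  have hint := beta_integrable ha hb
  have hint1 : IntervalIntegrable (fun t : ℝ => t ^ (a - 1) * (1 - t) ^ (b - 1)) volume 0 (1/2) :=
    hint.mono_set (by rw [Set.uIcc_of_le, Set.uIcc_of_le] <;> norm_num <;>
      exact Set.Icc_subset_Icc (le_refl _) (by norm_num))
  have hint2 : IntervalIntegrable (fun t : ℝ => t ^ (a - 1) * (1 - t) ^ (b - 1)) volume (1/2) 1 :=
    hint.mono_set (by rw [Set.uIcc_of_le, Set.uIcc_of_le] <;> norm_num <;>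
      exact Set.Icc_subset_Icc (by norm_num) (le_refl _))
  have hsplit : (∫ t in (0:ℝ)..(1/2), t ^ (a - 1) * (1 - t) ^ (b - 1)) +
      (∫ t in (1/2:ℝ)..1, t ^ (a - 1) * (1 - t) ^ (b - 1)) =
      ∫ t in (0:ℝ)..1, t ^ (a - 1) * (1 - t) ^ (b - 1) :=
    intervalIntegral.integral_add_adjacent_intervals hint1 hint2
  -- ∫₀^{1/2} t^(a-1) = (1/2)^a / a
  have hIa : (∫ t in (0:ℝ)..(1/2), t ^ (a - 1)) = (1/2 : ℝ) ^ a / a := by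
    rw [integral_rpow (Or.inl (by linarith : (-1:ℝ) < a - 1))]
    rw [show a - 1 + 1 = a by ring, Real.zero_rpow (ne_of_gt ha)]
    ring
  have hIb : (∫ t in (0:ℝ)..(1/2), t ^ (b - 1)) = (1/2 : ℝ) ^ b / b := by
    rw [integral_rpow (Or.inl (by linarith : (-1:ℝ) < b - 1))]
    rw [show b - 1 + 1 = b by ring, Real.zero_rpow (ne_of_gt hb)]
    ring
  have half_rpow : ∀ r : ℝ, (1/2 : ℝ) ^ r = ((2:ℝ) ^ r)⁻¹ := by
    intro r
    rw [one_div, Real.inv_rpow (by norm_num : (0:ℝ) ≤ 2)]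
  rcases le_or_gt 1 b with hb1 | hb1
  · -- case 1 ≤ b
    have hmono : (∫ t in (0:ℝ)..(1/2), (1/2:ℝ) ^ (b-1) * t ^ (a - 1)) ≤
        ∫ t in (0:ℝ)..(1/2), t ^ (a - 1) * (1 - t) ^ (b - 1) := by
      refine intervalIntegral.integral_mono_on (by norm_num)
        (((intervalIntegrable_rpow' (by linarith)).const_mul _)) hint1 (fun t ht => ?_)
      have h1 : (1/2:ℝ) ^ (b-1) ≤ (1 - t) ^ (b-1) :=
        Real.rpow_le_rpow (by norm_num) (by linarith [ht.2]) (by linarith)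
      calc (1/2:ℝ) ^ (b-1) * t ^ (a-1) ≤ (1 - t) ^ (b-1) * t ^ (a-1) :=
            mul_le_mul_of_nonneg_right h1 (Real.rpow_nonneg ht.1 _)
        _ = t ^ (a-1) * (1 - t) ^ (b-1) := by ring
    have hpos2 : (0:ℝ) ≤ ∫ t in (1/2:ℝ)..1, t ^ (a - 1) * (1 - t) ^ (b - 1) := by
      refine intervalIntegral.integral_nonneg (by norm_num) (fun t ht => ?_)
      exact mul_nonneg (Real.rpow_nonneg (by linarith [ht.1]) _)
        (Real.rpow_nonneg (by linarith [ht.2]) _)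
    have hval : (∫ t in (0:ℝ)..(1/2), (1/2:ℝ) ^ (b-1) * t ^ (a - 1)) =
        (1/2:ℝ) ^ (b-1) * ((1/2:ℝ) ^ a / a) := by
      rw [intervalIntegral.integral_const_mul, hIa]
    have hfin : 4 / (x * 2 ^ x) ≤ (1/2:ℝ) ^ (b-1) * ((1/2:ℝ) ^ a / a) := by
      rw [half_rpow, half_rpow]
      have hprod : (2:ℝ) ^ (b-1) * 2 ^ a = 2 ^ x / 2 := by
        rw [← Real.rpow_add two_pos, show b - 1 + a = x - 1 by rw [hxdef]; ring,
          Real.rpow_sub two_pos, Real.rpow_one]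
      have h2b : (0:ℝ) < 2 ^ (b-1) := rpow_pos_of_pos two_pos _
      have h2a : (0:ℝ) < 2 ^ a := rpow_pos_of_pos two_pos _
      rw [div_le_iff₀ (by positivity)]
      have key2 : 4 * (2 ^ (b-1) * 2^a * a) ≤ x * 2 ^ x := by
        rw [show (2:ℝ) ^ (b-1) * 2^a = 2^x/2 from hprod]
        have : 2 * a ≤ x := by rw [hxdef]; linarith
        nlinarith
      rw [show ((2:ℝ)^(b-1))⁻¹ * ((2^a)⁻¹/a) * (x*2^x) = (x*2^x)/(2^(b-1)*2^a*a) by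
        field_simp, le_div_iff₀ (by positivity)]
      linarith [key2]
    linarith [hmono, hpos2, hsplit, hval.symm.le, hfin]
  · -- case b < 1, so a < 1 too
    have ha1 : a < 1 := lt_of_le_of_lt hab hb1
    have hmono1 : (∫ t in (0:ℝ)..(1/2), t ^ (a - 1)) ≤
        ∫ t in (0:ℝ)..(1/2), t ^ (a - 1) * (1 - t) ^ (b - 1) := by
      refine intervalIntegral.integral_mono_on (by norm_num)
        (intervalIntegrable_rpow' (by linarith)) hint1 (fun t ht => ?_)
      have h1 : (1:ℝ) ≤ (1 - t) ^ (b-1) :=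
        Real.one_le_rpow_of_pos_of_le_one_of_nonpos (by linarith [ht.2]) (by linarith [ht.1])
          (by linarith)
      calc t ^ (a-1) = t ^ (a-1) * 1 := by ring
        _ ≤ t ^ (a-1) * (1-t) ^ (b-1) :=
            mul_le_mul_of_nonneg_left h1 (Real.rpow_nonneg ht.1 _)
    have hmono2 : (∫ t in (1/2:ℝ)..1, (1 - t) ^ (b - 1)) ≤
        ∫ t in (1/2:ℝ)..1, t ^ (a - 1) * (1 - t) ^ (b - 1) := by
      have hintb : IntervalIntegrable (fun t : ℝ => (1 - t) ^ (b - 1)) volume (1/2) 1 := by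
        have := (intervalIntegrable_rpow' (r := b - 1) (by linarith)
          (a := 0) (b := 1/2)).comp_sub_left 1
        norm_num at this
        exact this.symm
      refine intervalIntegral.integral_mono_on (by norm_num) hintb hint2 (fun t ht => ?_)
      rcases eq_or_lt_of_le ht.2 with h | h
      · subst h
        simp [Real.zero_rpow (show b - 1 ≠ 0 by intro hh; nlinarith)]
      · have h1 : (1:ℝ) ≤ t ^ (a-1) :=
          Real.one_le_rpow_of_pos_of_le_one_of_nonpos (by linarith [ht.1]) ht.2 (by linarith)
        calc (1-t) ^ (b-1) = 1 * (1-t) ^ (b-1) := by ring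
          _ ≤ t ^ (a-1) * (1-t) ^ (b-1) :=
              mul_le_mul_of_nonneg_right h1 (Real.rpow_nonneg (by linarith) _)
    have hval2 : (∫ t in (1/2:ℝ)..1, (1 - t) ^ (b - 1)) = (1/2:ℝ) ^ b / b := by
      have h := intervalIntegral.integral_comp_sub_left
        (a := (1/2:ℝ)) (b := 1) (fun t : ℝ => t ^ (b - 1)) 1
      norm_num at h
      rw [h, hIb]
    have hfin : 4 / (x * 2 ^ x) ≤ (1/2:ℝ) ^ a / a + (1/2:ℝ) ^ b / b := by
      rw [half_rpow, half_rpow]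
      have h2a : (0:ℝ) < 2 ^ a := rpow_pos_of_pos two_pos _
      have h2b : (0:ℝ) < 2 ^ b := rpow_pos_of_pos two_pos _
      have hax : (2:ℝ) ^ a ≤ 2 ^ x :=
        Real.rpow_le_rpow_of_exponent_le one_le_two (by rw [hxdef]; linarith)
      have hbx : (2:ℝ) ^ b ≤ 2 ^ x :=
        Real.rpow_le_rpow_of_exponent_le one_le_two (by rw [hxdef]; linarith)
      have step1 : ((2:ℝ)^x)⁻¹ / a + ((2:ℝ)^x)⁻¹ / b ≤ ((2:ℝ)^a)⁻¹ / a + ((2:ℝ)^b)⁻¹ / b := by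
        gcongr <;> assumption
      refine le_trans ?_ step1
      rw [div_le_iff₀ (by positivity)]
      have heq : (((2:ℝ)^x)⁻¹/a + ((2:ℝ)^x)⁻¹/b) * (x*2^x) = x/a + x/b := by
        field_simp
      rw [heq, hxdef, div_add_div _ _ ha.ne' hb.ne', le_div_iff₀ (by positivity)]
      nlinarith [sq_nonneg (a - b)]
    linarith [hmono1, hmono2, hsplit, hval2.symm.le, hfin]

/-- For `0 < y < x`, `Γ(x)/(Γ(y)·Γ(x−y)) ≤ (x/4)·2^x`. -/
theorem stmt9 (x y : ℝ) (hy : 0 < y) (hyx : y < x) :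
    Real.Gamma x / (Real.Gamma y * Real.Gamma (x - y)) ≤ x / 4 * (2 : ℝ) ^ x := by
  have hx : 0 < x := hy.trans hyx
  have hb : 0 < x - y := by linarith
  have hΓx := Real.Gamma_pos_of_pos hx
  set B := ∫ t in (0:ℝ)..1, t ^ (y - 1) * (1 - t) ^ (x - y - 1) with hBdef
  have hgb : Real.Gamma y * Real.Gamma (x - y) = Real.Gamma x * B := by
    have := gamma_beta hy hb
    rwa [show y + (x - y) = x by ring] at this
  have hBlb : 4 / (x * 2 ^ x) ≤ B := by
    rcases le_total y (x - y) with h | h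
    · have := key hy hb h
      rwa [show y + (x - y) = x by ring] at this
    · have := key hb hy h
      rw [show x - y + y = x by ring, beta_symm] at this
      exact this
  have hBpos : 0 < B := lt_of_lt_of_le (by positivity) hBlb
  rw [hgb, div_mul_cancel_left₀ hΓx.ne']
  calc B⁻¹ ≤ (4 / (x * 2 ^ x))⁻¹ := by
        apply inv_anti₀ (by positivity) hBlb
    _ = x / 4 * 2 ^ x := by rw [inv_div]; ring
end

section
/- For every real x > 0, Γ(x)/Γ(x/2)² = (x/4) · ∏_{n=1}^∞ ( 1 + (4(n/x)² + 4n/x)^{−1} ), where the infinite product converges. -/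
open Filter Finset Real Topology

/-- For `x > 0`,
`Γ(x)/Γ(x/2)² = (x/4)·∏_{n≥1} (1 + (4(n/x)² + 4n/x)⁻¹)`, and the product converges. -/
theorem stmt10 (x : ℝ) (hx : 0 < x) :
    Multipliable (fun n : ℕ => 1 + (4 * (((n : ℝ) + 1) / x) ^ 2 + 4 * (((n : ℝ) + 1) / x))⁻¹) ∧
      Real.Gamma x / Real.Gamma (x / 2) ^ 2 =
        x / 4 * ∏' n : ℕ, (1 + (4 * (((n : ℝ) + 1) / x) ^ 2 + 4 * (((n : ℝ) + 1) / x))⁻¹) := by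
  have hx0 : x ≠ 0 := hx.ne'
  set t : ℕ → ℝ := fun n => 1 + (4 * (((n : ℝ) + 1) / x) ^ 2 + 4 * (((n : ℝ) + 1) / x))⁻¹ with ht
  have hden : ∀ n : ℕ, (0:ℝ) < 4 * (((n : ℝ) + 1) / x) ^ 2 + 4 * (((n : ℝ) + 1) / x) := by
    intro n; positivity
  have ht1 : ∀ n, 1 ≤ t n := fun n => le_add_of_nonneg_right (inv_nonneg.2 (hden n).le)
  have htformula : ∀ n : ℕ, t n = (x/2 + ((n:ℝ)+1))^2 / ((((n:ℝ)+1)) * (x + ((n:ℝ)+1))) := by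
    intro n
    have h1 : ((n:ℝ)+1) ≠ 0 := by positivity
    have h2 : x + ((n:ℝ)+1) ≠ 0 := by positivity
    have h3 := (hden n).ne'
    rw [ht]
    field_simp
    ring
  -- partial product formula
  have hprod : ∀ N : ℕ, ∏ n ∈ range N, t n
      = (∏ j ∈ range (N+1), (x/2 + (j:ℝ))^2) / ((Nat.factorial N) * ∏ j ∈ range (N+1), (x + (j:ℝ))) * (4/x) := by
    intro N
    induction N with
    | zero =>
      simp only [range_zero, prod_empty, range_one, prod_singleton, Nat.cast_zero, add_zero, zero_add,
        Nat.factorial_zero, Nat.cast_one, one_mul]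
      field_simp
      ring
    | succ N ih =>
      have hP1 : (∏ j ∈ range (N+1), (x + (j:ℝ))) ≠ 0 := by
        refine (Finset.prod_pos ?_).ne'
        intro j _; positivity
      have hF : ((Nat.factorial N) : ℝ) ≠ 0 := Nat.cast_ne_zero.2 (Nat.factorial_ne_zero N)
      have h1 : ((N:ℝ)+1) ≠ 0 := by positivity
      have h2 : x + ((N:ℝ)+1) ≠ 0 := by positivity
      rw [prod_range_succ, ih, htformula N,
        prod_range_succ (fun j => (x/2 + (j:ℝ))^2) (N+1),
        prod_range_succ (fun j => x + (j:ℝ)) (N+1),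
        Nat.factorial_succ]
      push_cast
      field_simp
  -- relation with GammaSeq
  have hgs : ∀ N : ℕ, 1 ≤ N → ∏ n ∈ range N, t n
      = 4/x * (Real.GammaSeq x N / (Real.GammaSeq (x/2) N)^2) := by
    intro N hN
    have hNpos : (0:ℝ) < N := by exact_mod_cast hN
    have hNx : (0:ℝ) < (N:ℝ) ^ x := Real.rpow_pos_of_pos hNpos x
    have hP1 : (∏ j ∈ range (N+1), (x + (j:ℝ))) ≠ 0 := by
      refine (Finset.prod_pos ?_).ne'
      intro j _; positivity
    have hP2 : (∏ j ∈ range (N+1), (x/2 + (j:ℝ))) ≠ 0 := by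
      refine (Finset.prod_pos ?_).ne'
      intro j _; positivity
    have hF : ((Nat.factorial N) : ℝ) ≠ 0 := Nat.cast_ne_zero.2 (Nat.factorial_ne_zero N)
    have hsq : ((N:ℝ) ^ (x/2))^2 = (N:ℝ) ^ x := by
      rw [sq, ← Real.rpow_add hNpos]; norm_num
    have hNx2 : ((N:ℝ) ^ (x/2)) ≠ 0 := (Real.rpow_pos_of_pos hNpos _).ne'
    rw [hprod N, Real.GammaSeq, Real.GammaSeq, Finset.prod_pow, div_pow, mul_pow, hsq]
    field_simp
  -- the sequence of partial products tends to L
  have hG2 : Real.Gamma (x/2) ^ 2 ≠ 0 := pow_ne_zero 2 (Real.Gamma_pos_of_pos (half_pos hx)).ne'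
  set L : ℝ := 4/x * (Real.Gamma x / Real.Gamma (x/2) ^ 2) with hL
  have htend : Tendsto (fun N => ∏ n ∈ range N, t n) atTop (𝓝 L) := by
    have h1 : Tendsto (fun N : ℕ => 4/x * (Real.GammaSeq x N / (Real.GammaSeq (x/2) N)^2))
        atTop (𝓝 L) := by
      exact ((Real.GammaSeq_tendsto_Gamma x).div
        ((Real.GammaSeq_tendsto_Gamma (x/2)).pow 2) hG2).const_mul (4/x)
    refine h1.congr' ?_
    filter_upwards [eventually_ge_atTop 1] with N hN
    exact (hgs N hN).symm
  -- monotonicity of partial products (over finsets)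
  have hprodnn : ∀ s : Finset ℕ, (0:ℝ) ≤ ∏ i ∈ s, t i := fun s =>
    Finset.prod_nonneg fun i _ => le_trans zero_le_one (ht1 i)
  have hone_le : ∀ s : Finset ℕ, (1:ℝ) ≤ ∏ i ∈ s, t i := by
    intro s
    calc (1:ℝ) = ∏ _i ∈ s, 1 := by simp
    _ ≤ ∏ i ∈ s, t i := Finset.prod_le_prod (fun i _ => zero_le_one) (fun i _ => ht1 i)
  have hmono : Monotone (fun s : Finset ℕ => ∏ i ∈ s, t i) := by
    intro s u hsu
    dsimp only
    rw [← Finset.prod_sdiff hsu]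
    exact le_mul_of_one_le_left (hprodnn s) (hone_le (u \ s))
  have hseqmono : Monotone (fun N : ℕ => ∏ n ∈ range N, t n) := fun a b hab =>
    hmono (Finset.range_subset_range.2 hab)
  have hseqle : ∀ N, ∏ n ∈ range N, t n ≤ L := fun N => hseqmono.ge_of_tendsto htend N
  have hLUB : IsLUB (Set.range fun s : Finset ℕ => ∏ i ∈ s, t i) L := by
    constructor
    · rintro _ ⟨s, rfl⟩
      obtain ⟨N, hsN⟩ := s.exists_nat_subset_range
      exact le_trans (hmono hsN) (hseqle N)
    · intro b hb
      exact le_of_tendsto htend (Eventually.of_forall fun N => hb ⟨range N, rfl⟩)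
  have hHP : HasProd t L := tendsto_atTop_isLUB hmono hLUB
  refine ⟨hHP.multipliable, ?_⟩
  rw [hHP.tprod_eq, hL]
  field_simp
end

section
/- The improper integral ∫₀^∞ log( 1 + 1/(4x² + 4x) ) dx converges and equals log 2. -/
open MeasureTheory Real Filter Topology

private noncomputable def stmt11G : ℝ → ℝ := fun x =>
  (2 * x + 1) * Real.log (2 * x + 1) - 2 * x * Real.log 2 - x * Real.log x
    - (x + 1) * Real.log (x + 1)

private lemma stmt11G_cont : Continuous stmt11G := by
  unfold stmt11G
  refine (((Real.continuous_mul_log.comp (by continuity)).sub (by continuity)).sub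
    Real.continuous_mul_log).sub (Real.continuous_mul_log.comp (by continuity))

private lemma stmt11_deriv : ∀ x ∈ Set.Ioi (0 : ℝ),
    HasDerivAt stmt11G (Real.log (1 + 1 / (4 * x ^ 2 + 4 * x))) x := by
  intro x hx
  have hx0 : (0 : ℝ) < x := hx
  have h1 : (0:ℝ) < 2 * x + 1 := by linarith
  have h2 : (0:ℝ) < x + 1 := by linarith
  have d1 : HasDerivAt (fun x : ℝ => (2 * x + 1) * Real.log (2 * x + 1))
      (2 * Real.log (2 * x + 1) + (2 * x + 1) * (2 / (2 * x + 1))) x := by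
    have ha : HasDerivAt (fun x : ℝ => 2 * x + 1) 2 x := by
      simpa using ((hasDerivAt_id x).const_mul 2).add_const 1
    exact ha.mul (ha.log h1.ne')
  have d2 : HasDerivAt (fun x : ℝ => 2 * x * Real.log 2) (2 * Real.log 2) x := by
    simpa [mul_comm, mul_assoc] using
      ((hasDerivAt_id x).const_mul (2 * Real.log 2)).congr_deriv (by ring)
  have d3 : HasDerivAt (fun x : ℝ => x * Real.log x) (1 * Real.log x + x * x⁻¹) x :=
    (hasDerivAt_id x).mul (Real.hasDerivAt_log hx0.ne')
  have d4 : HasDerivAt (fun x : ℝ => (x + 1) * Real.log (x + 1))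
      (1 * Real.log (x + 1) + (x + 1) * (1 / (x + 1))) x := by
    have ha : HasDerivAt (fun x : ℝ => x + 1) 1 x := (hasDerivAt_id x).add_const 1
    exact ha.mul (ha.log h2.ne')
  have hsum := ((d1.sub d2).sub d3).sub d4
  have heq : Real.log (1 + 1 / (4 * x ^ 2 + 4 * x)) =
      2 * Real.log (2 * x + 1) + (2 * x + 1) * (2 / (2 * x + 1)) - 2 * Real.log 2
        - (1 * Real.log x + x * x⁻¹) - (1 * Real.log (x + 1) + (x + 1) * (1 / (x + 1))) := by
    have e1 : 1 + 1 / (4 * x ^ 2 + 4 * x) = (2 * x + 1) ^ 2 / (2 * (x * (x + 1)) * 2) := by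
      field_simp
      ring
    rw [e1, Real.log_div (by positivity) (by positivity), Real.log_pow,
      Real.log_mul (by positivity) two_ne_zero, Real.log_mul two_ne_zero (by positivity),
      Real.log_mul hx0.ne' h2.ne']
    field_simp
    ring
  rw [heq]
  exact hsum

private lemma stmt11_tendsto : Tendsto stmt11G atTop (𝓝 (Real.log 2)) := by
  have t1 : Tendsto (fun x : ℝ => x * Real.log (1 + (1/2 : ℝ) / x)) atTop (𝓝 (1/2 : ℝ)) :=
    Real.tendsto_mul_log_one_add_div_atTop (1/2)
  have t2 : Tendsto (fun x : ℝ => (x + 1) * Real.log (1 + (-(1/2) : ℝ) / (x + 1))) atTop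
      (𝓝 (-(1/2) : ℝ)) := by
    have := (Real.tendsto_mul_log_one_add_div_atTop (-(1/2))).comp
      (tendsto_atTop_add_const_right atTop 1 tendsto_id)
    simpa [Function.comp_def] using this
  have htot : Tendsto (fun x : ℝ => Real.log 2 + x * Real.log (1 + (1/2 : ℝ) / x)
      + (x + 1) * Real.log (1 + (-(1/2) : ℝ) / (x + 1))) atTop
      (𝓝 (Real.log 2 + 1/2 + -(1/2))) :=
    (tendsto_const_nhds.add t1).add t2
  have : (Real.log 2 + 1/2 + -(1/2) : ℝ) = Real.log 2 := by ring
  rw [this] at htot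
  refine htot.congr' ?_
  filter_upwards [eventually_gt_atTop (0 : ℝ)] with x hx
  have h1 : (0:ℝ) < 2 * x + 1 := by linarith
  have h2 : (0:ℝ) < x + 1 := by linarith
  have e1 : 1 + (1/2 : ℝ) / x = (2 * x + 1) / (2 * x) := by field_simp
  have e2 : 1 + (-(1/2) : ℝ) / (x + 1) = (2 * x + 1) / (2 * (x + 1)) := by field_simp; ring
  rw [e1, e2, Real.log_div h1.ne' (by positivity), Real.log_div h1.ne' (by positivity),
    Real.log_mul two_ne_zero hx.ne', Real.log_mul two_ne_zero h2.ne']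
  unfold stmt11G
  ring

/-- `∫₀^∞ log(1 + 1/(4x² + 4x)) dx = log 2`, and the integrand is
integrable on `(0, ∞)`. -/
theorem stmt11 :
    IntegrableOn (fun x : ℝ => Real.log (1 + 1 / (4 * x ^ 2 + 4 * x))) (Set.Ioi 0) volume ∧
      ∫ x in Set.Ioi (0 : ℝ), Real.log (1 + 1 / (4 * x ^ 2 + 4 * x)) = Real.log 2 := by
  have hcont : ContinuousWithinAt stmt11G (Set.Ici 0) 0 :=
    stmt11G_cont.continuousWithinAt
  have hpos : ∀ x ∈ Set.Ioi (0 : ℝ), 0 ≤ Real.log (1 + 1 / (4 * x ^ 2 + 4 * x)) := by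
    intro x hx
    have hx0 : (0:ℝ) < x := hx
    have : (0:ℝ) ≤ 1 / (4 * x ^ 2 + 4 * x) := by positivity
    exact Real.log_nonneg (by linarith)
  refine ⟨integrableOn_Ioi_deriv_of_nonneg hcont stmt11_deriv hpos stmt11_tendsto, ?_⟩
  rw [integral_Ioi_of_hasDerivAt_of_nonneg hcont stmt11_deriv hpos stmt11_tendsto]
  have : stmt11G 0 = 0 := by unfold stmt11G; norm_num
  rw [this, sub_zero]
end

section
/- For every real M ≥ 1 and every x ∈ ℝ, the series ∑_{j=1}^∞ (1 + j²/M²)^{−2} cos(jx) converges absolutely and 1/2 + ∑_{j=1}^∞ (1 + j²/M²)^{−2} cos(jx) ≥ 0. -/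
open MeasureTheory Real Set Filter

lemma stmt12_W_bound {t : ℝ} (ht0 : 0 ≤ t) : (1 + t) * Real.exp (-t) ≤ 2 * Real.exp (-(1/2) * t) := by
  have h1 : 1 + t ≤ 2 * Real.exp ((1/2) * t) := by
    have := Real.add_one_le_exp ((1/2) * t)
    nlinarith [Real.exp_pos ((1/2)*t)]
  calc (1 + t) * Real.exp (-t) ≤ 2 * Real.exp ((1/2) * t) * Real.exp (-t) :=
        mul_le_mul_of_nonneg_right h1 (Real.exp_pos _).le
    _ = 2 * Real.exp (-(1/2) * t) := by rw [mul_assoc, ← Real.exp_add]; ring_nf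

lemma stmt12_W_integrable : IntegrableOn (fun t : ℝ => (1 + t) * Real.exp (-t)) (Ioi 0) := by
  have h2 : (0:ℝ) < 1/2 := by norm_num
  refine (Integrable.mono' ((exp_neg_integrableOn_Ioi 0 h2).const_mul 2)
    (Continuous.aestronglyMeasurable (by continuity)) ?_)
  filter_upwards [ae_restrict_mem measurableSet_Ioi] with t ht
  have ht0 : (0:ℝ) ≤ t := le_of_lt ht
  rw [Real.norm_eq_abs, abs_of_nonneg (by positivity)]
  exact stmt12_W_bound ht0


open MeasureTheory Real Set Filter

lemma stmt12_key (b : ℝ) :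
    ∫ t in Ioi (0:ℝ), (1 + t) * Real.exp (-t) * Real.cos (b * t) = 2 / (1 + b^2)^2 := by
  set c : ℝ := 1 + b^2 with hc
  have hc0 : 0 < c := by positivity
  have hcne : c ≠ 0 := ne_of_gt hc0
  set F : ℝ → ℝ := fun t => Real.exp (-t) *
    ((-t/c - 2/c^2) * Real.cos (b*t) + (b*t/c + (b^3 + 3*b)/c^2) * Real.sin (b*t)) with hF
  have hderiv : ∀ t : ℝ, HasDerivAt F ((1 + t) * Real.exp (-t) * Real.cos (b * t)) t := by
    intro t
    have hexp : HasDerivAt (fun t : ℝ => Real.exp (-t)) (-Real.exp (-t)) t := by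
      simpa using ((hasDerivAt_id t).neg).exp
    have hbt : HasDerivAt (fun t : ℝ => b * t) b t := by
      simpa using (hasDerivAt_id t).const_mul b
    have hcos : HasDerivAt (fun t : ℝ => Real.cos (b*t)) (-Real.sin (b*t) * b) t := hbt.cos
    have hsin : HasDerivAt (fun t : ℝ => Real.sin (b*t)) (Real.cos (b*t) * b) t := hbt.sin
    have hP : HasDerivAt (fun t : ℝ => -t/c - 2/c^2) (-1/c) t := by
      simpa using (((hasDerivAt_id t).neg).div_const c).sub_const (2/c^2)
    have hQ : HasDerivAt (fun t : ℝ => b*t/c + (b^3 + 3*b)/c^2) (b/c) t := by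
      simpa using (hbt.div_const c).add_const ((b^3 + 3*b)/c^2)
    have := hexp.mul ((hP.mul hcos).add (hQ.mul hsin))
    convert this using 1
    have hsq : c^2 ≠ 0 := pow_ne_zero 2 hcne
    · rfl
    · rfl
    · rfl
    simp only [Pi.mul_apply, Pi.add_apply]
    rw [hc]
    field_simp
    ring_nf
  have hcont : ContinuousWithinAt F (Ici 0) 0 :=
    ((hderiv 0).continuousAt).continuousWithinAt
  have hint : IntegrableOn (fun t : ℝ => (1 + t) * Real.exp (-t) * Real.cos (b * t)) (Ioi 0) := by
    refine (Integrable.mono' ((exp_neg_integrableOn_Ioi 0 (by norm_num : (0:ℝ) < 1/2)).const_mul 2)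
      (Continuous.aestronglyMeasurable (by continuity)) ?_)
    filter_upwards [ae_restrict_mem measurableSet_Ioi] with t ht
    have ht0 : (0:ℝ) ≤ t := le_of_lt ht
    rw [Real.norm_eq_abs, abs_mul]
    calc |(1 + t) * Real.exp (-t)| * |Real.cos (b*t)| ≤ |(1 + t) * Real.exp (-t)| * 1 :=
          mul_le_mul_of_nonneg_left (abs_cos_le_one _) (abs_nonneg _)
      _ = (1 + t) * Real.exp (-t) := by rw [mul_one, abs_of_nonneg (by positivity)]
      _ ≤ 2 * Real.exp (-(1/2) * t) := by
          have h1 : 1 + t ≤ 2 * Real.exp ((1/2) * t) := by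
            have := Real.add_one_le_exp ((1/2) * t)
            nlinarith [Real.exp_pos ((1/2)*t)]
          calc (1 + t) * Real.exp (-t) ≤ 2 * Real.exp ((1/2) * t) * Real.exp (-t) :=
                mul_le_mul_of_nonneg_right h1 (Real.exp_pos _).le
            _ = 2 * Real.exp (-(1/2) * t) := by rw [mul_assoc, ← Real.exp_add]; ring_nf
  have htends : Tendsto F atTop (nhds 0) := by
    have hb1 : Tendsto (fun t : ℝ => ((1/c + |b| / c) * (t * Real.exp (-t)) +
        (2/c^2 + (|b| ^ 3 + 3 * |b|)/c^2) * Real.exp (-t))) atTop (nhds 0) := by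
      have h1 := (tendsto_pow_mul_exp_neg_atTop_nhds_zero 1).const_mul (1/c + |b| / c)
      have h2 := (Real.tendsto_exp_neg_atTop_nhds_zero).const_mul (2/c^2 + (|b| ^ 3 + 3 * |b|)/c^2)
      simpa using h1.add h2
    refine squeeze_zero_norm' ?_ hb1
    filter_upwards [eventually_ge_atTop (0:ℝ)] with t ht0
    rw [hF, Real.norm_eq_abs]
    have he : (0:ℝ) < Real.exp (-t) := Real.exp_pos _
    rw [abs_mul, abs_of_pos he]
    have hA : |(-t/c - 2/c^2)| ≤ t/c + 2/c^2 := by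
      refine (abs_sub _ _).trans ?_
      rw [abs_div, abs_neg, abs_of_nonneg ht0, abs_of_pos hc0, abs_div,
        abs_of_pos (by positivity : (0:ℝ) < c^2)]
      norm_num
    have hB : |b*t/c + (b^3 + 3*b)/c^2| ≤ |b| * t / c + (|b| ^ 3 + 3 * |b|)/c^2 := by
      refine (abs_add_le _ _).trans ?_
      have e1 : |b*t/c| = |b| * t / c := by
        rw [abs_div, abs_mul, abs_of_nonneg ht0, abs_of_pos hc0]
      have e2 : |(b^3 + 3*b)/c^2| ≤ (|b| ^ 3 + 3 * |b|)/c^2 := by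
        rw [abs_div, abs_of_pos (by positivity : (0:ℝ) < c^2)]
        have : |b^3 + 3*b| ≤ |b| ^ 3 + 3 * |b| := by
          refine (abs_add_le _ _).trans ?_
          rw [abs_pow, abs_mul]
          norm_num
        exact div_le_div_of_nonneg_right this (by positivity) |>.trans_eq rfl
      linarith [e1.le, e1.ge, e2]
    have h1 : |(-t/c - 2/c^2) * Real.cos (b*t) + (b*t/c + (b^3 + 3*b)/c^2) * Real.sin (b*t)|
        ≤ (1/c + |b| / c) * t + (2/c^2 + (|b| ^ 3 + 3 * |b|)/c^2) := by
      refine (abs_add_le _ _).trans ?_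
      rw [abs_mul, abs_mul]
      have m1 : |(-t/c - 2/c^2)| * |Real.cos (b*t)| ≤ |(-t/c - 2/c^2)| :=
        mul_le_of_le_one_right (abs_nonneg _) (abs_cos_le_one _)
      have m2 : |b*t/c + (b^3 + 3*b)/c^2| * |Real.sin (b*t)| ≤ |b*t/c + (b^3 + 3*b)/c^2| :=
        mul_le_of_le_one_right (abs_nonneg _) (abs_sin_le_one _)
      have e3 : t/c = (1/c)*t := by ring
      have e4 : |b| * t / c = (|b| / c) * t := by ring
      linarith
    calc Real.exp (-t) * |(-t/c - 2/c^2) * Real.cos (b*t) + (b*t/c + (b^3 + 3*b)/c^2) * Real.sin (b*t)|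
        ≤ Real.exp (-t) * ((1/c + |b| / c) * t + (2/c^2 + (|b| ^ 3 + 3 * |b|)/c^2)) :=
          mul_le_mul_of_nonneg_left h1 he.le
      _ = (1/c + |b| / c) * (t * Real.exp (-t)) + (2/c^2 + (|b| ^ 3 + 3 * |b|)/c^2) * Real.exp (-t) := by
          ring
  have heq := integral_Ioi_of_hasDerivAt_of_tendsto hcont (fun t _ => hderiv t) hint htends
  rw [heq, hF]
  norm_num


open MeasureTheory Real Set Filter
open Complex (I)

noncomputable def stmt12P (r θ : ℝ) : ℝ := ∑' j : ℕ, r^(j+1) * Real.cos (((j:ℝ)+1)*θ)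

lemma stmt12P_summable {r : ℝ} (h1 : |r| < 1) (θ : ℝ) :
    Summable (fun j : ℕ => r^(j+1) * Real.cos (((j:ℝ)+1)*θ)) := by
  refine Summable.of_norm ?_
  refine Summable.of_nonneg_of_le (fun j => norm_nonneg _) (fun j => ?_)
    ((summable_geometric_of_lt_one (abs_nonneg r) h1).mul_left |r|)
  rw [norm_mul, norm_pow, Real.norm_eq_abs, Real.norm_eq_abs, pow_succ']
  exact mul_le_of_le_one_right (by positivity) (abs_cos_le_one _)

lemma stmt12P_nonneg {r : ℝ} (h0 : 0 ≤ r) (h1 : r < 1) (θ : ℝ) :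
    0 ≤ 1/2 + stmt12P r θ := by
  set z : ℂ := (r:ℂ) * Complex.exp (θ * I) with hz
  have hnz : ‖z‖ < 1 := by
    rw [hz, norm_mul, Complex.norm_exp_ofReal_mul_I]
    rw [Complex.norm_real, Real.norm_eq_abs, _root_.abs_of_nonneg h0]
    simpa using h1
  have hsumz : Summable (fun j : ℕ => z^(j+1)) := by
    simpa [pow_succ'] using (summable_geometric_of_norm_lt_one hnz).mul_left z
  have hre : ∀ j : ℕ, (z^(j+1)).re = r^(j+1) * Real.cos (((j:ℝ)+1)*θ) := by
    intro j
    have : z^(j+1) = ((r^(j+1) : ℝ) : ℂ) * Complex.exp ((((j:ℝ)+1)*θ : ℝ) * I) := by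
      rw [hz, mul_pow, ← Complex.exp_nat_mul]
      push_cast
      ring_nf
    rw [this, Complex.re_ofReal_mul, Complex.exp_ofReal_mul_I_re]
  have htsum : stmt12P r θ = (∑' j : ℕ, z^(j+1)).re := by
    rw [Complex.re_tsum hsumz, stmt12P]
    exact tsum_congr (fun j => (hre j).symm)
  have hzsum : ∑' j : ℕ, z^(j+1) = z * (1 - z)⁻¹ := by
    calc ∑' j : ℕ, z^(j+1) = ∑' j : ℕ, z * z^j := by
          refine tsum_congr (fun j => ?_); rw [pow_succ']
      _ = z * ∑' j : ℕ, z^j := tsum_mul_left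
      _ = z * (1 - z)⁻¹ := by rw [tsum_geometric_of_norm_lt_one hnz]
  rw [htsum, hzsum]
  set a := z.re
  set b := z.im
  have hlt : a^2 + b^2 < 1 := by
    have : Complex.normSq z < 1 := by
      have := hnz
      rw [← Complex.sq_norm]
      calc ‖z‖ ^ 2 < 1^2 := by
            apply pow_lt_pow_left₀ hnz (norm_nonneg z)
            norm_num
        _ = 1 := one_pow 2
    simpa [Complex.normSq_apply, sq] using this
  have hN : 0 < (1-a)^2 + b^2 := by nlinarith [sq_nonneg (1-a), sq_nonneg b]
  have : (z * (1 - z)⁻¹).re = (a*(1-a) + b*(-b)) / ((1-a)^2 + b^2) := by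
    rw [← div_eq_mul_inv, Complex.div_re]
    have h1 : (1 - z).re = 1 - a := by simp [Complex.sub_re, a]
    have h2 : (1 - z).im = -b := by simp [Complex.sub_im, b]
    have h3 : Complex.normSq (1 - z) = (1-a)^2 + b^2 := by
      rw [Complex.normSq_apply, h1, h2]; ring
    rw [h1, h2, h3]
    ring
  rw [this]
  have key : 1/2 + (a*(1-a) + b*(-b)) / ((1-a)^2 + b^2) = (1 - a^2 - b^2) / (2*((1-a)^2 + b^2)) := by
    field_simp
    ring
  rw [key]
  exact div_nonneg (by linarith) (by positivity)


open MeasureTheory Real Set Filter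

lemma stmt12_main (M : ℝ) (hM : 1 ≤ M) (x r : ℝ) (hr0 : 0 < r) (hr1 : r < 1) :
    0 ≤ 1/2 + ∑' j : ℕ, ((1 + ((j : ℝ) + 1) ^ 2 / M ^ 2) ^ 2)⁻¹ * r^(j+1) *
      Real.cos (((j : ℝ) + 1) * x) := by
  have hM0 : 0 < M := lt_of_lt_of_le one_pos hM
  set A : ℕ → ℝ := fun j => ((1 + ((j : ℝ) + 1) ^ 2 / M ^ 2) ^ 2)⁻¹ with hA
  set W : ℝ → ℝ := fun t => (1 + t) * Real.exp (-t) with hW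
  set f : ℕ → ℝ → ℝ := fun j t =>
    W t * (r^(j+1) * Real.cos ((((j:ℝ)+1)/M) * t) * Real.cos (((j:ℝ)+1) * x)) with hf
  set G : ℝ → ℝ := fun t =>
    ∑' j : ℕ, r^(j+1) * Real.cos ((((j:ℝ)+1)/M) * t) * Real.cos (((j:ℝ)+1) * x) with hG
  have habs : |r| < 1 := by rw [abs_of_pos hr0]; exact hr1
  have hgeo : Summable (fun j : ℕ => r^(j+1)) := by
    simpa [pow_succ'] using (summable_geometric_of_lt_one hr0.le hr1).mul_left r
  have hterm_le : ∀ (j : ℕ) (t : ℝ),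
      ‖r^(j+1) * Real.cos ((((j:ℝ)+1)/M) * t) * Real.cos (((j:ℝ)+1) * x)‖ ≤ r^(j+1) := by
    intro j t
    rw [Real.norm_eq_abs, abs_mul, abs_mul, _root_.abs_pow, _root_.abs_of_pos hr0]
    have hp : (0:ℝ) ≤ r^(j+1) := pow_nonneg hr0.le _
    have m1 : r^(j+1) * |Real.cos ((((j:ℝ)+1)/M) * t)| ≤ r^(j+1) :=
      mul_le_of_le_one_right hp (abs_cos_le_one _)
    have m2 : r^(j+1) * |Real.cos ((((j:ℝ)+1)/M) * t)| * |Real.cos (((j:ℝ)+1) * x)|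
        ≤ r^(j+1) * |Real.cos ((((j:ℝ)+1)/M) * t)| :=
      mul_le_of_le_one_right (mul_nonneg hp (abs_nonneg _)) (abs_cos_le_one _)
    exact m2.trans m1
  have hGsum : ∀ t : ℝ, Summable (fun j : ℕ =>
      r^(j+1) * Real.cos ((((j:ℝ)+1)/M) * t) * Real.cos (((j:ℝ)+1) * x)) := by
    intro t
    exact Summable.of_norm (Summable.of_nonneg_of_le (fun j => norm_nonneg _)
      (fun j => hterm_le j t) hgeo)
  have hGcont : Continuous G := by
    refine continuous_tsum (fun j => ?_) hgeo (fun j t => hterm_le j t)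
    exact (continuous_const.mul (Real.continuous_cos.comp
      (continuous_const.mul continuous_id))).mul continuous_const
  have hGbdd : ∀ t : ℝ, ‖G t‖ ≤ ∑' j : ℕ, r^(j+1) := by
    intro t
    refine (norm_tsum_le_tsum_norm ((hGsum t).abs.congr ?_)).trans ?_
    · intro j; rw [Real.norm_eq_abs]
    · exact Summable.tsum_le_tsum (fun j => hterm_le j t) ((hGsum t).norm) hgeo
  have hWint : IntegrableOn W (Ioi 0) := stmt12_W_integrable
  have hWmeas : AEStronglyMeasurable W (volume.restrict (Ioi 0)) :=
    (Continuous.aestronglyMeasurable (by fun_prop))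
  have hfint : ∀ j : ℕ, Integrable (f j) (volume.restrict (Ioi 0)) := by
    intro j
    have : Integrable (fun t =>
        (r^(j+1) * Real.cos ((((j:ℝ)+1)/M) * t) * Real.cos (((j:ℝ)+1) * x)) * W t)
        (volume.restrict (Ioi 0)) := by
      refine Integrable.bdd_mul (c := r^(j+1)) hWint (Continuous.aestronglyMeasurable (by fun_prop)) ?_
      exact ae_of_all _ (fun t => hterm_le j t)
    exact this.congr (ae_of_all _ (fun t => by rw [hf]; ring))
  have hIj : ∀ j : ℕ, ∫ t in Ioi 0, f j t
      = (r^(j+1) * Real.cos (((j:ℝ)+1) * x)) * (2 * A j) := by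
    intro j
    have h1 : ∀ t : ℝ, f j t = (r^(j+1) * Real.cos (((j:ℝ)+1) * x)) *
        (W t * Real.cos ((((j:ℝ)+1)/M) * t)) := by intro t; rw [hf]; ring
    rw [show (fun t => f j t) = fun t => (r^(j+1) * Real.cos (((j:ℝ)+1) * x)) *
        (W t * Real.cos ((((j:ℝ)+1)/M) * t)) from funext h1]
    rw [integral_const_mul, stmt12_key (((j:ℝ)+1)/M)]
    have h2 : (1 + (((j:ℝ)+1)/M)^2)^2 = (1 + ((j : ℝ) + 1) ^ 2 / M ^ 2) ^ 2 := by
      rw [div_pow]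
    rw [h2, hA]
    have h3 : (0:ℝ) < (1 + ((j : ℝ) + 1) ^ 2 / M ^ 2) ^ 2 := by positivity
    field_simp
  have hWval : ∫ t in Ioi 0, W t = 2 := by
    have := stmt12_key 0
    simpa using this
  have hnormsum : Summable (fun j : ℕ => ∫ t in Ioi 0, ‖f j t‖) := by
    refine Summable.of_nonneg_of_le (fun j => integral_nonneg (fun t => norm_nonneg _))
      (fun j => ?_) (hgeo.mul_right 2)
    have hle : ∀ᵐ t ∂(volume.restrict (Ioi 0)), ‖f j t‖ ≤ r^(j+1) * W t := by
      filter_upwards [ae_restrict_mem measurableSet_Ioi] with t ht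
      have ht0 : (0:ℝ) ≤ t := le_of_lt ht
      have hWnn : 0 ≤ W t := by rw [hW]; positivity
      calc ‖f j t‖ = ‖W t‖ * ‖r^(j+1) * Real.cos ((((j:ℝ)+1)/M) * t) *
            Real.cos (((j:ℝ)+1) * x)‖ := by rw [hf, norm_mul]
        _ ≤ ‖W t‖ * r^(j+1) := by
            exact mul_le_mul_of_nonneg_left (hterm_le j t) (norm_nonneg _)
        _ = r^(j+1) * W t := by rw [Real.norm_eq_abs, abs_of_nonneg hWnn]; ring
    calc ∫ t in Ioi 0, ‖f j t‖ ≤ ∫ t in Ioi 0, r^(j+1) * W t := by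
          refine integral_mono_of_nonneg (ae_of_all _ (fun t => norm_nonneg _))
            (hWint.const_mul _) hle
      _ = r^(j+1) * 2 := by rw [integral_const_mul, hWval]
  have hswap : ∑' j : ℕ, ∫ t in Ioi 0, f j t = ∫ t in Ioi 0, (∑' j : ℕ, f j t) :=
    integral_tsum_of_summable_integral_norm hfint hnormsum
  have hS : ∀ t : ℝ, (∑' j : ℕ, f j t) = W t * G t := by
    intro t; rw [hG]; exact tsum_mul_left
  have hWGint : IntegrableOn (fun t => W t * G t) (Ioi 0) := by
    have : Integrable (fun t => G t * W t) (volume.restrict (Ioi 0)) :=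
      Integrable.bdd_mul hWint hGcont.aestronglyMeasurable (ae_of_all _ hGbdd)
    exact this.congr (ae_of_all _ (fun t => by ring))
  -- key identity
  have hkey : 1/2 + ∑' j : ℕ, A j * r^(j+1) * Real.cos (((j:ℝ)+1) * x)
      = (1/4) * ∫ t in Ioi 0, W t * (1 + 2 * G t) := by
    have e1 : ∫ t in Ioi 0, W t * (1 + 2 * G t)
        = (∫ t in Ioi 0, W t) + 2 * ∫ t in Ioi 0, W t * G t := by
      have : (fun t => W t * (1 + 2 * G t)) = fun t => W t + 2 * (W t * G t) := by
        funext t; ring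
      rw [this, integral_add hWint (hWGint.const_mul 2), integral_const_mul]
    have e2 : ∫ t in Ioi 0, W t * G t
        = 2 * ∑' j : ℕ, A j * r^(j+1) * Real.cos (((j:ℝ)+1) * x) := by
      rw [show (fun t => W t * G t) = fun t => ∑' j : ℕ, f j t from funext fun t => (hS t).symm,
        ← hswap]
      rw [show (fun j : ℕ => ∫ t in Ioi 0, f j t)
        = fun j : ℕ => 2 * (A j * r^(j+1) * Real.cos (((j:ℝ)+1) * x)) from
        funext fun j => by rw [hIj j]; ring]
      rw [tsum_mul_left]
    rw [e1, hWval, e2]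
    ring
  rw [hkey]
  refine mul_nonneg (by norm_num) (setIntegral_nonneg measurableSet_Ioi (fun t ht => ?_))
  have ht0 : (0:ℝ) ≤ t := le_of_lt ht
  have hWnn : 0 ≤ W t := by rw [hW]; positivity
  refine mul_nonneg hWnn ?_
  have hsplit : 1 + 2 * G t = (1/2 + stmt12P r (t/M + x)) + (1/2 + stmt12P r (t/M - x)) := by
    have hs1 := stmt12P_summable habs (t/M + x)
    have hs2 := stmt12P_summable habs (t/M - x)
    have e : ∀ j : ℕ, 2 * (r^(j+1) * Real.cos ((((j:ℝ)+1)/M) * t) * Real.cos (((j:ℝ)+1) * x))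
        = r^(j+1) * Real.cos (((j:ℝ)+1) * (t/M + x)) + r^(j+1) * Real.cos (((j:ℝ)+1) * (t/M - x)) := by
      intro j
      have harg : (((j:ℝ)+1)/M) * t = ((j:ℝ)+1) * (t/M) := by ring
      rw [harg, show ((j:ℝ)+1) * (t/M + x) = ((j:ℝ)+1) * (t/M) + ((j:ℝ)+1) * x by ring,
        show ((j:ℝ)+1) * (t/M - x) = ((j:ℝ)+1) * (t/M) - ((j:ℝ)+1) * x by ring,
        Real.cos_add, Real.cos_sub]
      ring
    have h2G : 2 * G t = stmt12P r (t/M + x) + stmt12P r (t/M - x) := by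
      rw [hG, ← tsum_mul_left, stmt12P, stmt12P, ← Summable.tsum_add hs1 hs2]
      exact tsum_congr e
    linarith [h2G]
  rw [show (1:ℝ) + 2 * G t = 1 + 2 * G t from rfl]
  have := stmt12P_nonneg hr0.le hr1 (t/M + x)
  have := stmt12P_nonneg hr0.le hr1 (t/M - x)
  linarith [hsplit]


set_option maxHeartbeats 1000000 in
/-- For `M ≥ 1` and `x ∈ ℝ`, the series `∑_{j≥1} (1+j²/M²)^{−2} cos(jx)`
converges absolutely and `1/2 + ∑_{j≥1} (1+j²/M²)^{−2} cos(jx) ≥ 0`. -/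
theorem stmt12 (M : ℝ) (hM : 1 ≤ M) (x : ℝ) :
    (Summable fun j : ℕ =>
        |((1 + ((j : ℝ) + 1) ^ 2 / M ^ 2) ^ 2)⁻¹ * Real.cos (((j : ℝ) + 1) * x)|) ∧
      0 ≤ 1 / 2 +
          ∑' j : ℕ, ((1 + ((j : ℝ) + 1) ^ 2 / M ^ 2) ^ 2)⁻¹ * Real.cos (((j : ℝ) + 1) * x) := by
  have hM0 : 0 < M := lt_of_lt_of_le one_pos hM
  set A : ℕ → ℝ := fun j => ((1 + ((j : ℝ) + 1) ^ 2 / M ^ 2) ^ 2)⁻¹ with hA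
  have hApos : ∀ j : ℕ, 0 < A j := fun j => by rw [hA]; positivity
  have hA_sum : Summable A := by
    have hs : Summable (fun j : ℕ => M^4 * (1 / ((j:ℝ)+1)^2)) := by
      have h1 : Summable (fun n : ℕ => 1 / ((n:ℝ))^2) := summable_one_div_nat_pow.mpr one_lt_two
      have h2 : Summable (fun n : ℕ => 1 / (((n:ℕ)+1:ℕ):ℝ)^2) :=
        (summable_nat_add_iff (f := fun n : ℕ => 1 / ((n:ℝ))^2) 1).mpr h1
      refine (h2.congr ?_).mul_left _
      intro n; push_cast; ring
    refine Summable.of_nonneg_of_le (fun j => (hApos j).le) (fun j => ?_) hs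
    set n : ℝ := (j:ℝ)+1 with hn
    have hn1 : (1:ℝ) ≤ n := by rw [hn]; have : (0:ℝ) ≤ (j:ℝ) := Nat.cast_nonneg j; linarith
    have hn0 : 0 < n := lt_of_lt_of_le one_pos hn1
    have key : (n^2/M^2)^2 ≤ (1 + n^2/M^2)^2 := by
      have h0 : (0:ℝ) ≤ n^2/M^2 := by positivity
      nlinarith
    have h2 : A j ≤ ((n^2/M^2)^2)⁻¹ := by
      rw [hA]
      exact inv_anti₀ (by positivity) key
    refine h2.trans ?_
    have e1 : ((n^2/M^2)^2)⁻¹ = M^4/n^4 := by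
      field_simp
    rw [e1]
    rw [div_eq_mul_one_div]
    have : (1:ℝ)/n^4 ≤ 1/n^2 := by
      apply div_le_div_of_nonneg_left one_pos.le (by positivity)
      nlinarith [hn1, sq_nonneg n, sq_nonneg (n-1), sq_nonneg (n+1), sq_nonneg (n^2-1)]
    exact mul_le_mul_of_nonneg_left this (by positivity)
  have habs_le : ∀ j : ℕ, |A j * Real.cos (((j : ℝ) + 1) * x)| ≤ A j := by
    intro j
    rw [abs_mul, _root_.abs_of_pos (hApos j)]
    exact mul_le_of_le_one_right (hApos j).le (abs_cos_le_one _)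
  constructor
  · exact Summable.of_nonneg_of_le (fun j => abs_nonneg _) habs_le hA_sum
  · -- limit argument
    have hT : Summable (fun j : ℕ => A j * Real.cos (((j : ℝ) + 1) * x)) :=
      Summable.of_abs (Summable.of_nonneg_of_le (fun j => abs_nonneg _) habs_le hA_sum)
    have htend : Filter.Tendsto
        (fun r : ℝ => ∑' j : ℕ, A j * r^(j+1) * Real.cos (((j : ℝ) + 1) * x))
        (nhdsWithin 1 (Set.Iio 1))
        (nhds (∑' j : ℕ, A j * Real.cos (((j : ℝ) + 1) * x))) := by
      refine tendsto_tsum_of_dominated_convergence hA_sum (fun j => ?_) ?_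
      · have hc : Continuous (fun r : ℝ => A j * r^(j+1) * Real.cos (((j : ℝ) + 1) * x)) := by
          fun_prop
        have := (hc.tendsto 1).mono_left (nhdsWithin_le_nhds (s := Set.Iio 1))
        simpa using this
      · have h0 : ∀ᶠ r in nhdsWithin 1 (Set.Iio 1), (0:ℝ) < r := by
          refine eventually_nhdsWithin_of_eventually_nhds ?_
          exact eventually_gt_nhds one_pos
        filter_upwards [h0, self_mem_nhdsWithin] with r hr0 hr1 j
        have hrle : |r| ≤ 1 := by
          rw [_root_.abs_of_pos hr0]; exact le_of_lt hr1
        rw [Real.norm_eq_abs, abs_mul, abs_mul, _root_.abs_pow,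
          _root_.abs_of_pos (hApos j)]
        calc A j * |r|^(j+1) * |Real.cos (((j : ℝ) + 1) * x)|
            ≤ A j * 1 * 1 := by
              have hp : |r|^(j+1) ≤ 1 := pow_le_one₀ (abs_nonneg r) hrle
              have m1 : A j * |r|^(j+1) ≤ A j * 1 :=
                mul_le_mul_of_nonneg_left hp (hApos j).le
              have m2 : A j * |r|^(j+1) * |Real.cos (((j : ℝ) + 1) * x)| ≤ A j * |r|^(j+1) :=
                mul_le_of_le_one_right (mul_nonneg (hApos j).le (by positivity)) (abs_cos_le_one _)
              calc A j * |r|^(j+1) * |Real.cos (((j : ℝ) + 1) * x)|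
                  ≤ A j * |r|^(j+1) := m2
                _ ≤ A j * 1 := m1
                _ = A j * 1 * 1 := by ring
          _ = A j := by ring
    have htend2 : Filter.Tendsto
        (fun r : ℝ => 1/2 + ∑' j : ℕ, A j * r^(j+1) * Real.cos (((j : ℝ) + 1) * x))
        (nhdsWithin 1 (Set.Iio 1))
        (nhds (1/2 + ∑' j : ℕ, A j * Real.cos (((j : ℝ) + 1) * x))) :=
      Filter.Tendsto.const_add _ htend
    have hev : ∀ᶠ r in nhdsWithin (1:ℝ) (Set.Iio 1),
        0 ≤ 1/2 + ∑' j : ℕ, A j * r^(j+1) * Real.cos (((j : ℝ) + 1) * x) := by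
      have h0 : ∀ᶠ r in nhdsWithin (1:ℝ) (Set.Iio 1), (0:ℝ) < r :=
        eventually_nhdsWithin_of_eventually_nhds (eventually_gt_nhds one_pos)
      filter_upwards [h0, self_mem_nhdsWithin] with r hr0 hr1
      exact stmt12_main M hM x r hr0 hr1
    exact ge_of_tendsto htend2 hev
end

section
/- For every integer J ≥ 1 and every c ∈ (0,1) there exists a constant C > 0 with the following property: for every real-valued function T on [0,1] of the form T(s) = ∑_{j=−2J}^{2J} α_j e^{2πijs} with complex coefficients α_j, such that T(s) ≥ 0 for all s ∈ [0,1] and ∫₀¹ T(s) ds = 1, and for every Lebesgue-measurable function f : [0,1] → ℝ with 0 ≤ f(s) ≤ 1 for all s and ∫₀¹ f(s) ds ≥ c, one has ∫₀¹ T(s) f(s) ds ≥ C. -/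
open Real MeasureTheory Filter

noncomputable def Strig (J : ℕ) (α : ℤ → ℂ) (s : ℝ) : ℂ :=
  ∑ j ∈ Finset.Icc (-(2 * J : ℤ)) (2 * J : ℤ),
    α j * Complex.exp (2 * (π : ℂ) * Complex.I * (j : ℂ) * (s : ℂ))

lemma norm_exp_I (j : ℤ) (s : ℝ) :
    ‖Complex.exp (2 * (π : ℂ) * Complex.I * (j : ℂ) * (s : ℂ))‖ = 1 := by
  have : (2 * (π : ℂ) * Complex.I * (j : ℂ) * (s : ℂ)) = ((2 * π * j * s : ℝ) : ℂ) * Complex.I := by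
    push_cast; ring
  rw [this]
  exact Complex.norm_exp_ofReal_mul_I _

lemma Strig_continuous (J : ℕ) (α : ℤ → ℂ) : Continuous (Strig J α) := by
  refine continuous_finset_sum _ fun j _ => ?_
  exact continuous_const.mul (Complex.continuous_exp.comp (by continuity))

lemma Strig_diff (J : ℕ) (α β : ℤ → ℂ) (s : ℝ) :
    ‖Strig J α s - Strig J β s‖ ≤
      ∑ j ∈ Finset.Icc (-(2 * J : ℤ)) (2 * J : ℤ), ‖α j - β j‖ := by
  rw [Strig, Strig, ← Finset.sum_sub_distrib]
  refine (norm_sum_le _ _).trans (Finset.sum_le_sum fun j _ => ?_)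
  rw [← sub_mul, norm_mul, norm_exp_I, mul_one]

lemma fiber_countable (z : ℂ) :
    Set.Countable {s : ℝ | Complex.exp (2 * (π : ℂ) * Complex.I * (s : ℂ)) = z} := by
  by_cases h : ∃ t : ℝ, Complex.exp (2 * (π : ℂ) * Complex.I * (t : ℂ)) = z
  · obtain ⟨t, ht⟩ := h
    have hsub : {s : ℝ | Complex.exp (2 * (π : ℂ) * Complex.I * (s : ℂ)) = z} ⊆
        Set.range (fun n : ℤ => t + n) := by
      intro s hs
      simp only [Set.mem_setOf_eq] at hs
      rw [← ht] at hs
      obtain ⟨n, hn⟩ := Complex.exp_eq_exp_iff_exists_int.mp hs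
      refine ⟨n, ?_⟩
      have hpi : (2 * (π : ℂ) * Complex.I) ≠ 0 := by
        exact mul_ne_zero (mul_ne_zero two_ne_zero (Complex.ofReal_ne_zero.mpr Real.pi_ne_zero)) Complex.I_ne_zero
      have : (s : ℂ) = (t : ℂ) + (n : ℂ) := by
        have h2 : 2 * (π : ℂ) * Complex.I * (s : ℂ) = 2 * (π : ℂ) * Complex.I * ((t : ℂ) + n) := by
          rw [hn]; ring
        exact mul_left_cancel₀ hpi h2
      have : ((s : ℝ) : ℂ) = ((t + n : ℝ) : ℂ) := by push_cast; rw [this]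
      exact (Complex.ofReal_inj.mp this).symm ▸ rfl
    exact (Set.countable_range _).mono hsub
  · push_neg at h
    have : {s : ℝ | Complex.exp (2 * (π : ℂ) * Complex.I * (s : ℂ)) = z} = ∅ := by
      ext s; simpa using h s
    simp [this]

lemma zero_set_null (J : ℕ) (L : ℤ → ℂ) (hL0 : L 0 = 1) :
    volume {s : ℝ | s ∈ Set.Icc (0:ℝ) 1 ∧ Strig J L s = 0} = 0 := by
  classical
  set Q : Polynomial ℂ :=
    ∑ j ∈ Finset.Icc (-(2 * J : ℤ)) (2 * J : ℤ),
      Polynomial.C (L j) * Polynomial.X ^ (j + 2 * J).toNat with hQ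
  have hcoeff : Q.coeff (2 * J) = 1 := by
    rw [hQ, Polynomial.finset_sum_coeff]
    rw [Finset.sum_eq_single (0 : ℤ)]
    · rw [Polynomial.coeff_C_mul, Polynomial.coeff_X_pow, if_pos (by omega), mul_one, hL0]
    · intro j hj hj0
      rw [Polynomial.coeff_C_mul, Polynomial.coeff_X_pow, if_neg, mul_zero]
      simp only [Finset.mem_Icc] at hj
      omega
    · intro h
      simp only [Finset.mem_Icc] at h
      omega
  have hQne : Q ≠ 0 := fun h => by simp [h] at hcoeff
  have heval : ∀ s : ℝ, Strig J L s =
      Complex.exp (-(2 * (π : ℂ) * Complex.I * ((2 * J : ℤ) : ℂ) * (s : ℂ))) *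
        Q.eval (Complex.exp (2 * (π : ℂ) * Complex.I * (s : ℂ))) := by
    intro s
    rw [hQ, Polynomial.eval_finset_sum, Finset.mul_sum, Strig]
    refine Finset.sum_congr rfl fun j hj => ?_
    simp only [Finset.mem_Icc] at hj
    rw [Polynomial.eval_mul, Polynomial.eval_C, Polynomial.eval_pow, Polynomial.eval_X,
      ← Complex.exp_nat_mul]
    have h2 : ((j + 2 * (J:ℤ)).toNat : ℤ) = j + 2 * J := Int.toNat_of_nonneg (by omega)
    have h1 : ((j + 2 * (J:ℤ)).toNat : ℂ) = (j : ℂ) + 2 * J := by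
      exact_mod_cast congrArg (fun m : ℤ => (m : ℂ)) h2
    rw [h1, show Complex.exp (-(2 * (π : ℂ) * Complex.I * ((2 * J : ℤ) : ℂ) * (s : ℂ))) *
        (L j * Complex.exp (((j : ℂ) + 2 * J) * (2 * (π : ℂ) * Complex.I * (s : ℂ)))) =
        L j * (Complex.exp (-(2 * (π : ℂ) * Complex.I * ((2 * J : ℤ) : ℂ) * (s : ℂ))) *
          Complex.exp (((j : ℂ) + 2 * J) * (2 * (π : ℂ) * Complex.I * (s : ℂ)))) from by ring,
      ← Complex.exp_add]
    congr 1
    push_cast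
    ring
  have hsub : {s : ℝ | s ∈ Set.Icc (0:ℝ) 1 ∧ Strig J L s = 0} ⊆
      ⋃ z ∈ Q.roots.toFinset, {s : ℝ | Complex.exp (2 * (π : ℂ) * Complex.I * (s : ℂ)) = z} := by
    intro s hs
    obtain ⟨-, hs0⟩ := hs
    rw [heval s, mul_eq_zero] at hs0
    have hz : Q.eval (Complex.exp (2 * (π : ℂ) * Complex.I * (s : ℂ))) = 0 := by
      rcases hs0 with h | h
      · exact absurd h (Complex.exp_ne_zero _)
      · exact h
    simp only [Set.mem_iUnion, Set.mem_setOf_eq]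
    exact ⟨_, Multiset.mem_toFinset.mpr ((Polynomial.mem_roots hQne).mpr hz), rfl⟩
  refine measure_mono_null hsub ?_
  refine Set.Countable.measure_zero ?_ _
  exact Set.Countable.biUnion (Q.roots.toFinset.countable_toSet) fun z _ => fiber_countable z

lemma ortho (m : ℤ) :
    (∫ s in (0:ℝ)..1, Complex.exp (2 * (π : ℂ) * Complex.I * (m : ℂ) * (s : ℝ))) =
      if m = 0 then 1 else 0 := by
  by_cases hm : m = 0
  · simp [hm]
  · rw [if_neg hm]
    have hc : (2 * (π : ℂ) * Complex.I * (m : ℂ)) ≠ 0 := by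
      refine mul_ne_zero (mul_ne_zero (mul_ne_zero two_ne_zero
        (Complex.ofReal_ne_zero.mpr Real.pi_ne_zero)) Complex.I_ne_zero) ?_
      exact_mod_cast hm
    rw [integral_exp_mul_complex hc]
    have h1 : Complex.exp (2 * (π : ℂ) * Complex.I * (m : ℂ) * ((1:ℝ):ℂ)) = 1 := by
      rw [show (2 * (π : ℂ) * Complex.I * (m : ℂ) * ((1:ℝ):ℂ)) =
        (m : ℂ) * (2 * (π : ℂ) * Complex.I) from by push_cast; ring]
      exact Complex.exp_int_mul_two_pi_mul_I m
    rw [h1]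
    simp

lemma cont_exp_mul (c : ℂ) : Continuous fun s : ℝ => Complex.exp (c * (s : ℂ)) :=
  Complex.continuous_exp.comp (continuous_const.mul Complex.continuous_ofReal)

set_option maxHeartbeats 1000000 in
lemma coeff_formula (J : ℕ) (α : ℤ → ℂ) (T : ℝ → ℝ)
    (hT : ∀ s : ℝ, (T s : ℂ) = Strig J α s)
    (k : ℤ) (hk : k ∈ Finset.Icc (-(2 * J : ℤ)) (2 * J : ℤ)) :
    α k = ∫ s in (0:ℝ)..1,
      (T s : ℂ) * Complex.exp (-(2 * (π : ℂ) * Complex.I * (k : ℂ) * (s : ℝ))) := by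
  have key : ∀ s : ℝ, (T s : ℂ) * Complex.exp (-(2 * (π : ℂ) * Complex.I * (k : ℂ) * (s : ℝ))) =
      ∑ j ∈ Finset.Icc (-(2 * J : ℤ)) (2 * J : ℤ),
        α j * Complex.exp (2 * (π : ℂ) * Complex.I * ((j - k : ℤ) : ℂ) * (s : ℝ)) := by
    intro s
    rw [hT s, Strig, Finset.sum_mul]
    refine Finset.sum_congr rfl fun j _ => ?_
    rw [mul_assoc, ← Complex.exp_add]
    congr 2
    push_cast
    ring
  calc α k = ∑ j ∈ Finset.Icc (-(2 * J : ℤ)) (2 * J : ℤ),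
        α j * (if j - k = 0 then (1:ℂ) else 0) := by
        rw [Finset.sum_congr rfl (fun j _ => by
          rw [show (if j - k = 0 then (1:ℂ) else 0) = if j = k then (1:ℂ) else 0 from by
            simp [sub_eq_zero]])]
        simp only [mul_ite, mul_one, mul_zero]
        rw [Finset.sum_ite_eq' _ k α]
        exact (if_pos hk).symm
    _ = ∑ j ∈ Finset.Icc (-(2 * J : ℤ)) (2 * J : ℤ),
        α j * ∫ s in (0:ℝ)..1, Complex.exp (2 * (π : ℂ) * Complex.I * ((j - k : ℤ) : ℂ) * (s : ℝ)) := by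
        refine Finset.sum_congr rfl fun j _ => ?_
        rw [ortho]
    _ = ∫ s in (0:ℝ)..1, ∑ j ∈ Finset.Icc (-(2 * J : ℤ)) (2 * J : ℤ),
        α j * Complex.exp (2 * (π : ℂ) * Complex.I * ((j - k : ℤ) : ℂ) * (s : ℝ)) := by
        rw [intervalIntegral.integral_finset_sum (fun j _ =>
          ((cont_exp_mul (2 * (π : ℂ) * Complex.I * ((j - k : ℤ) : ℂ))).intervalIntegrable
            (0:ℝ) 1).const_mul (α j))]
        exact Finset.sum_congr rfl fun j _ => (intervalIntegral.integral_const_mul _ _).symm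
    _ = _ := by
        refine intervalIntegral.integral_congr fun s _ => (key s).symm

lemma intT_interval (T : ℝ → ℝ) (hT1 : (∫ s in Set.Icc (0:ℝ) 1, T s) = 1) :
    (∫ s in (0:ℝ)..1, T s) = 1 := by
  rw [intervalIntegral.integral_of_le (by norm_num : (0:ℝ) ≤ 1),
    ← integral_Icc_eq_integral_Ioc, hT1]

lemma coeff_zero (J : ℕ) (α : ℤ → ℂ) (T : ℝ → ℝ)
    (hT : ∀ s : ℝ, (T s : ℂ) = Strig J α s)
    (hT1 : (∫ s in Set.Icc (0:ℝ) 1, T s) = 1) : α 0 = 1 := by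
  have h0 : (0 : ℤ) ∈ Finset.Icc (-(2 * J : ℤ)) (2 * J : ℤ) := by
    simp only [Finset.mem_Icc]; omega
  rw [coeff_formula J α T hT 0 h0]
  have : ∀ s : ℝ, (T s : ℂ) * Complex.exp (-(2 * (π : ℂ) * Complex.I * ((0:ℤ) : ℂ) * (s : ℝ)))
      = ((T s : ℝ) : ℂ) := by
    intro s; simp
  rw [intervalIntegral.integral_congr (fun s _ => this s), intervalIntegral.integral_ofReal,
    intT_interval T hT1]
  norm_num

lemma coeff_norm_le (J : ℕ) (α : ℤ → ℂ) (T : ℝ → ℝ)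
    (hT : ∀ s : ℝ, (T s : ℂ) = Strig J α s)
    (hTpos : ∀ s ∈ Set.Icc (0:ℝ) 1, 0 ≤ T s)
    (hT1 : (∫ s in Set.Icc (0:ℝ) 1, T s) = 1)
    (k : ℤ) (hk : k ∈ Finset.Icc (-(2 * J : ℤ)) (2 * J : ℤ)) : ‖α k‖ ≤ 1 := by
  rw [coeff_formula J α T hT k hk]
  refine le_trans (intervalIntegral.norm_integral_le_integral_norm (by norm_num)) ?_
  have heq : Set.EqOn
      (fun s : ℝ => ‖(T s : ℂ) * Complex.exp (-(2 * (π : ℂ) * Complex.I * (k : ℂ) * (s : ℝ)))‖)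
      T (Set.uIcc (0:ℝ) 1) := by
    intro s hs
    rw [Set.uIcc_of_le (by norm_num : (0:ℝ) ≤ 1)] at hs
    have h1 : ‖Complex.exp (-(2 * (π : ℂ) * Complex.I * (k : ℂ) * (s : ℝ)))‖ = 1 := by
      rw [show (-(2 * (π : ℂ) * Complex.I * (k : ℂ) * (s : ℝ))) =
        ((-(2 * π * k * s) : ℝ) : ℂ) * Complex.I from by push_cast; ring]
      exact Complex.norm_exp_ofReal_mul_I _
    simp only [norm_mul, h1, mul_one, Complex.norm_real, Real.norm_eq_abs]
    exact abs_of_nonneg (hTpos s hs)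
  rw [intervalIntegral.integral_congr heq, intT_interval T hT1]

lemma lemA (J : ℕ) (c2 : ℝ) (hc2 : 0 < c2) :
    ∃ ε > 0, ∀ α : ℤ → ℂ, (∀ j, ‖α j‖ ≤ 1) → α 0 = 1 →
      volume {s : ℝ | s ∈ Set.Icc (0:ℝ) 1 ∧ ‖Strig J α s‖ ≤ ε} ≤ ENNReal.ofReal c2 := by
  by_contra hcon
  push_neg at hcon
  choose a ha h0 hv using fun k : ℕ => hcon (1/(k+1)) (by positivity)
  -- compactness
  have hK : IsCompact (Set.univ.pi fun _ : ℤ => Metric.closedBall (0:ℂ) 1) :=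
    isCompact_univ_pi fun _ => isCompact_closedBall 0 1
  have hmem : ∀ k, a k ∈ Set.univ.pi fun _ : ℤ => Metric.closedBall (0:ℂ) 1 := by
    intro k
    rw [Set.mem_univ_pi]
    intro j
    rw [Metric.mem_closedBall, dist_zero_right]
    exact ha k j
  obtain ⟨L, -, φ, hφ, hconv⟩ := hK.tendsto_subseq hmem
  have hcoord : ∀ j, Tendsto (fun k => a (φ k) j) atTop (nhds (L j)) :=
    fun j => tendsto_pi_nhds.mp hconv j
  have hL0 : L 0 = 1 := by
    have h1 : Tendsto (fun k => a (φ k) 0) atTop (nhds (1:ℂ)) := by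
      simpa [h0] using tendsto_const_nhds (x := (1:ℂ)) (f := atTop (α := ℕ))
    exact tendsto_nhds_unique (hcoord 0) h1
  have hsum : Tendsto (fun k => ∑ j ∈ Finset.Icc (-(2 * J : ℤ)) (2 * J : ℤ),
      ‖a (φ k) j - L j‖) atTop (nhds 0) := by
    have : Tendsto (fun k => ∑ j ∈ Finset.Icc (-(2 * J : ℤ)) (2 * J : ℤ),
        ‖a (φ k) j - L j‖) atTop
        (nhds (∑ j ∈ Finset.Icc (-(2 * J : ℤ)) (2 * J : ℤ), ‖L j - L j‖)) := by
      refine tendsto_finset_sum _ fun j _ => ?_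
      exact ((hcoord j).sub tendsto_const_nhds).norm
    simpa using this
  -- the sets E m
  set E : ℕ → Set ℝ := fun m =>
    {s : ℝ | s ∈ Set.Icc (0:ℝ) 1 ∧ ‖Strig J L s‖ ≤ 2/(m+1)} with hE
  have hEbig : ∀ m : ℕ, ENNReal.ofReal c2 ≤ volume (E m) := by
    intro m
    have h1 : ∀ᶠ k in atTop, ∑ j ∈ Finset.Icc (-(2 * J : ℤ)) (2 * J : ℤ),
        ‖a (φ k) j - L j‖ < 1/(m+1) := hsum.eventually (eventually_lt_nhds (by positivity))
    obtain ⟨k, hk1, hk2⟩ := (h1.and (eventually_ge_atTop m)).exists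
    have hφk : (m : ℝ) + 1 ≤ (φ k : ℝ) + 1 := by
      have : m ≤ φ k := hk2.trans (hφ.le_apply)
      exact_mod_cast by omega
    have hsubset : {s : ℝ | s ∈ Set.Icc (0:ℝ) 1 ∧ ‖Strig J (a (φ k)) s‖ ≤ 1/(φ k+1)} ⊆ E m := by
      intro s hs
      obtain ⟨hsI, hsle⟩ := hs
      refine ⟨hsI, ?_⟩
      have hd : ‖Strig J L s - Strig J (a (φ k)) s‖ ≤
          ∑ j ∈ Finset.Icc (-(2 * J : ℤ)) (2 * J : ℤ), ‖L j - a (φ k) j‖ := Strig_diff _ _ _ _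
      have hd2 : (∑ j ∈ Finset.Icc (-(2 * J : ℤ)) (2 * J : ℤ), ‖L j - a (φ k) j‖) ≤ 1/(m+1) := by
        refine le_of_lt ?_
        simpa [norm_sub_rev] using hk1
      calc ‖Strig J L s‖ ≤ ‖Strig J (a (φ k)) s‖ + ‖Strig J L s - Strig J (a (φ k)) s‖ := by
            have := norm_add_le (Strig J (a (φ k)) s) (Strig J L s - Strig J (a (φ k)) s)
            simpa using this
        _ ≤ 1/(φ k+1) + 1/(m+1) := add_le_add hsle (hd.trans hd2)
        _ ≤ 1/(m+1) + 1/(m+1) := by gcongr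
        _ = 2/(m+1) := by ring
    exact le_trans (le_of_lt (hv (φ k))) (measure_mono hsubset)
  -- measurability and antitone
  have hEmeas : ∀ m, MeasurableSet (E m) := by
    intro m
    have : E m = Set.Icc (0:ℝ) 1 ∩ (fun s => ‖Strig J L s‖) ⁻¹' Set.Iic (2/(m+1)) := by
      ext s; simp [hE, Set.mem_setOf_eq, and_comm]
    rw [this]
    exact measurableSet_Icc.inter (((Strig_continuous J L).norm).measurable measurableSet_Iic)
  have hanti : Antitone E := by
    intro m m' hmm' s hs
    refine ⟨hs.1, hs.2.trans ?_⟩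
    have : ((m:ℝ)+1) ≤ ((m':ℝ)+1) := by exact_mod_cast by omega
    gcongr
  have hfin : ∃ m, volume (E m) ≠ ⊤ := by
    refine ⟨0, ?_⟩
    refine ne_of_lt (lt_of_le_of_lt (measure_mono (fun s hs => hs.1)) ?_)
    rw [Real.volume_Icc]
    norm_num
  have hlim : Tendsto (volume ∘ E) atTop (nhds (volume (⋂ m, E m))) :=
    tendsto_measure_iInter_atTop (fun m => (hEmeas m).nullMeasurableSet) hanti hfin
  have hiInter : ENNReal.ofReal c2 ≤ volume (⋂ m, E m) :=
    ge_of_tendsto hlim (Eventually.of_forall hEbig)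
  have hzero : (⋂ m, E m) = {s : ℝ | s ∈ Set.Icc (0:ℝ) 1 ∧ Strig J L s = 0} := by
    ext s
    simp only [Set.mem_iInter, hE, Set.mem_setOf_eq]
    constructor
    · intro h
      refine ⟨(h 0).1, ?_⟩
      by_contra hne
      have hpos : 0 < ‖Strig J L s‖ := norm_pos_iff.mpr hne
      obtain ⟨m, hm⟩ := exists_nat_one_div_lt (show 0 < ‖Strig J L s‖/2 by positivity)
      have := (h m).2
      have : (2:ℝ)/(m+1) < ‖Strig J L s‖ := by
        rw [div_lt_iff₀ (by positivity : (0:ℝ) < (m:ℝ)+1)] at hm ⊢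
        linarith
      linarith [(h m).2]
    · intro h m
      exact ⟨h.1, by rw [h.2]; simp; positivity⟩
  rw [hzero, zero_set_null J L hL0] at hiInter
  simp only [nonpos_iff_eq_zero, ENNReal.ofReal_eq_zero] at hiInter
  linarith

/-- Uniform positive lower bound for `∫₀¹ T·f` over nonnegative normalised
trigonometric polynomials `T` of degree at most `2J` and `[0,1]`-valued measurable functions `f`
with `∫₀¹ f ≥ c`. -/
theorem stmt15 (J : ℕ) (hJ : 1 ≤ J) (c : ℝ) (hc : c ∈ Set.Ioo (0 : ℝ) 1) :
    ∃ C > 0, ∀ (α : ℤ → ℂ) (T : ℝ → ℝ),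
      (∀ s : ℝ, (T s : ℂ) =
          ∑ j ∈ Finset.Icc (-(2 * J : ℤ)) (2 * J : ℤ),
            α j * Complex.exp (2 * (π : ℂ) * Complex.I * (j : ℂ) * (s : ℂ))) →
      (∀ s ∈ Set.Icc (0 : ℝ) 1, 0 ≤ T s) →
      (∫ s in Set.Icc (0 : ℝ) 1, T s) = 1 →
      ∀ f : ℝ → ℝ, Measurable f →
        (∀ s ∈ Set.Icc (0 : ℝ) 1, 0 ≤ f s ∧ f s ≤ 1) →
        c ≤ ∫ s in Set.Icc (0 : ℝ) 1, f s →
        C ≤ ∫ s in Set.Icc (0 : ℝ) 1, T s * f s := by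
  obtain ⟨hc0, hc1⟩ := hc
  obtain ⟨ε, hε, hεA⟩ := lemA J (c/2) (by positivity)
  refine ⟨ε * (c/2), by positivity, ?_⟩
  intro α T hT hTpos hT1 f hf hf01 hfc
  set I : Set ℝ := Set.Icc (0:ℝ) 1 with hI
  -- replace α by its truncation
  set α' : ℤ → ℂ := fun j => if j ∈ Finset.Icc (-(2 * J : ℤ)) (2 * J : ℤ) then α j else 0 with hα'
  have hT' : ∀ s : ℝ, (T s : ℂ) = Strig J α' s := by
    intro s
    rw [hT s, Strig]
    exact Finset.sum_congr rfl fun j hj => by rw [hα']; simp [hj]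
  have hnorm : ∀ j, ‖α' j‖ ≤ 1 := by
    intro j
    by_cases hj : j ∈ Finset.Icc (-(2 * J : ℤ)) (2 * J : ℤ)
    · have := coeff_norm_le J α' T hT' hTpos hT1 j hj
      exact this
    · show ‖(if j ∈ Finset.Icc (-(2 * J : ℤ)) (2 * J : ℤ) then α j else 0)‖ ≤ 1
      rw [if_neg hj]; simp
  have h0 : α' 0 = 1 := coeff_zero J α' T hT' hT1
  have hvol := hεA α' hnorm h0
  set Z : Set ℝ := {s : ℝ | s ∈ I ∧ ‖Strig J α' s‖ ≤ ε} with hZ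
  have hZI : Z ⊆ I := fun s hs => hs.1
  have hZm : MeasurableSet Z := by
    have : Z = I ∩ (fun s => ‖Strig J α' s‖) ⁻¹' Set.Iic ε := by
      ext s; simp [hZ, Set.mem_setOf_eq]
    rw [this]
    exact measurableSet_Icc.inter (((Strig_continuous J α').norm).measurable measurableSet_Iic)
  -- T equals norm of Strig on I
  have hTnorm : ∀ s ∈ I, T s = ‖Strig J α' s‖ := by
    intro s hs
    rw [← hT' s, Complex.norm_real, Real.norm_eq_abs, abs_of_nonneg (hTpos s hs)]
  -- continuity of T
  have hTcont : Continuous T := by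
    have : T = fun s => (Strig J α' s).re := by
      funext s; rw [← hT' s, Complex.ofReal_re]
    rw [this]
    exact Complex.continuous_re.comp (Strig_continuous J α')
  -- integrability of f on I
  haveI : IsFiniteMeasure (volume.restrict I) := by
    constructor
    rw [Measure.restrict_apply_univ, hI, Real.volume_Icc]
    norm_num
  have hfae : AEStronglyMeasurable f (volume.restrict I) := hf.aestronglyMeasurable
  have hfint : IntegrableOn f I := by
    refine Integrable.mono' (integrable_const 1) hfae ?_
    filter_upwards [ae_restrict_mem measurableSet_Icc] with s hs
    rw [Real.norm_eq_abs, abs_of_nonneg (hf01 s hs).1]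
    exact (hf01 s hs).2
  -- integrability of T * f on I
  obtain ⟨M, hM⟩ := isCompact_Icc.exists_bound_of_continuousOn hTcont.continuousOn
  have hTfint : IntegrableOn (fun s => T s * f s) I := by
    refine Integrable.mono' (integrable_const M) ((hTcont.measurable.mul hf).aestronglyMeasurable) ?_
    filter_upwards [ae_restrict_mem measurableSet_Icc] with s hs
    rw [Real.norm_eq_abs, abs_mul]
    calc |T s| * |f s| ≤ M * 1 := by
          refine mul_le_mul ?_ ?_ (abs_nonneg _) ((abs_nonneg (T s)).trans ?_)
          · simpa [Real.norm_eq_abs] using hM s hs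
          · rw [abs_of_nonneg (hf01 s hs).1]; exact (hf01 s hs).2
          · simpa [Real.norm_eq_abs] using hM s hs
      _ = M := mul_one M
  -- ∫_Z f ≤ c/2
  have hvolZfin : volume Z < ⊤ := by
    refine lt_of_le_of_lt (measure_mono hZI) ?_
    rw [hI, Real.volume_Icc]; norm_num
  have hfZ : (∫ s in Z, f s) ≤ c/2 := by
    have h1 : ‖∫ s in Z, f s‖ ≤ 1 * (volume Z).toReal := by
      refine norm_setIntegral_le_of_norm_le_const hvolZfin ?_
      intro s hs
      rw [Real.norm_eq_abs, abs_of_nonneg (hf01 s hs.1).1]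
      exact (hf01 s hs.1).2
    have h2 : (volume Z).toReal ≤ c/2 := ENNReal.toReal_le_of_le_ofReal (by positivity) hvol
    calc (∫ s in Z, f s) ≤ ‖∫ s in Z, f s‖ := le_abs_self _
      _ ≤ 1 * (volume Z).toReal := h1
      _ ≤ c/2 := by linarith
  -- split ∫_I f
  have hsplit : (∫ s in I, f s) = (∫ s in Z, f s) + ∫ s in I \ Z, f s := by
    rw [← setIntegral_union Set.disjoint_sdiff_right (measurableSet_Icc.diff hZm)
      (hfint.mono_set hZI) (hfint.mono_set Set.diff_subset), Set.union_diff_cancel hZI]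
  have hfIZ : c/2 ≤ ∫ s in I \ Z, f s := by
    have := hfc
    rw [hsplit] at this
    linarith
  -- main chain
  have hmono : ε * ∫ s in I \ Z, f s ≤ ∫ s in I \ Z, T s * f s := by
    rw [← integral_const_mul]
    refine setIntegral_mono_on ((hfint.mono_set Set.diff_subset).const_mul ε)
      (hTfint.mono_set Set.diff_subset) (measurableSet_Icc.diff hZm) ?_
    intro s hs
    have hsI : s ∈ I := hs.1
    have hsT : ε < T s := by
      by_contra hle
      push_neg at hle
      exact hs.2 ⟨hsI, by rw [← hTnorm s hsI]; exact hle⟩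
    exact mul_le_mul_of_nonneg_right hsT.le (hf01 s hsI).1
  have hfinal : (∫ s in I \ Z, T s * f s) ≤ ∫ s in I, T s * f s := by
    refine setIntegral_mono_set hTfint ?_ (HasSubset.Subset.eventuallyLE Set.diff_subset)
    filter_upwards [ae_restrict_mem measurableSet_Icc] with s hs
    exact mul_nonneg (hTpos s hs) (hf01 s hs).1
  calc ε * (c/2) ≤ ε * ∫ s in I \ Z, f s := by
        exact mul_le_mul_of_nonneg_left hfIZ hε.le
    _ ≤ ∫ s in I \ Z, T s * f s := hmono
    _ ≤ ∫ s in I, T s * f s := hfinal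
end
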